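/- Let α be a finite type and ℓ : α → ℕ a function with ∑_x (2 : ℝ)^(−ℓ x) ≤ 1. Then there exists an injective, prefix-free binary code C : α → List Bool with (C x).length = ℓ x for every x; prefix-free means that for all x ≠ y, C x is not a prefix of C y. -/

import Mathlib

/-!
Order `α` so that `ℓ` is monotone and give `x` the first `ℓ x` binary digits of the partial
Kraft sum `F x = ∑_{y < x} 2^{-ℓ y}`. Since the lengths of the earlier words are at most `ℓ x`,
these digits represent `F x` exactly, and Kraft's inequality makes the dyadic intervals
`[F x, F x + 2^{-ℓ x})` disjoint subintervals of `[0, 1)`. A prefix relation between two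
codewords would nest the corresponding intervals.
-/

open Finset

def binaryDigits (m N : ℕ) : List Bool :=
  List.ofFn fun t : Fin m => N.testBit (m - 1 - t)

theorem length_binaryDigits (m N : ℕ) : (binaryDigits m N).length = m :=
  List.length_ofFn

theorem eq_div_two_pow_of_binaryDigits_prefix {m n a b : ℕ} (ha : a < 2 ^ m) (hb : b < 2 ^ n)
    (h : binaryDigits m a <+: binaryDigits n b) : m ≤ n ∧ a = b / 2 ^ (n - m) := by
  have hmn : m ≤ n := by simpa only [length_binaryDigits] using h.length_le
  refine ⟨hmn, Nat.eq_of_testBit_eq fun k => ?_⟩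
  rw [← Nat.shiftRight_eq_div_pow, Nat.testBit_shiftRight]
  by_cases hk : k < m
  · have := h.getElem (i := m - 1 - k) (by rw [length_binaryDigits]; omega)
    simp only [binaryDigits, List.getElem_ofFn] at this
    rwa [show m - 1 - (m - 1 - k) = k by omega,
      show n - 1 - (m - 1 - k) = n - m + k by omega] at this
  · rw [Nat.testBit_lt_two_pow (ha.trans_le (Nat.pow_le_pow_right two_pos (by omega))),
      Nat.testBit_lt_two_pow (hb.trans_le (Nat.pow_le_pow_right two_pos (by omega)))]

section

variable {α : Type*} [Fintype α] [LinearOrder α] {ℓ : α → ℕ}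

def kraftOffset (ℓ : α → ℕ) (x : α) : ℕ :=
  ∑ y ∈ univ.filter (· < x), 2 ^ (ℓ x - ℓ y)

def kraftCode (ℓ : α → ℕ) (x : α) : List Bool :=
  binaryDigits (ℓ x) (kraftOffset ℓ x)

theorem kraftOffset_cast (hℓ : Monotone ℓ) (x : α) :
    (kraftOffset ℓ x : ℝ) = 2 ^ ℓ x * ∑ y ∈ univ.filter (· < x), (2 : ℝ) ^ (-(ℓ y : ℤ)) := by
  rw [kraftOffset, Nat.cast_sum, mul_sum]
  refine sum_congr rfl fun y hy => ?_
  rw [Nat.cast_pow, Nat.cast_ofNat, pow_sub₀ _ two_ne_zero (hℓ (mem_filter.1 hy).2.le),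
    zpow_neg, zpow_natCast]

theorem kraftOffset_add_one_le (hℓ : Monotone ℓ) (hkraft : ∑ x, (2 : ℝ) ^ (-(ℓ x : ℤ)) ≤ 1)
    (x : α) : kraftOffset ℓ x + 1 ≤ 2 ^ ℓ x := by
  have hsum : ∑ y ∈ insert x (univ.filter (· < x)), (2 : ℝ) ^ (-(ℓ y : ℤ)) ≤ 1 :=
    (sum_le_sum_of_subset_of_nonneg (subset_univ _) fun _ _ _ => by positivity).trans hkraft
  rw [sum_insert (by simp)] at hsum
  have hpos : (0 : ℝ) < 2 ^ ℓ x := by positivity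
  have : (kraftOffset ℓ x + 1 : ℝ) ≤ 2 ^ ℓ x := by
    calc (kraftOffset ℓ x + 1 : ℝ)
        = 2 ^ ℓ x *
            ((2 : ℝ) ^ (-(ℓ x : ℤ)) + ∑ y ∈ univ.filter (· < x), (2 : ℝ) ^ (-(ℓ y : ℤ))) := by
          rw [kraftOffset_cast hℓ, mul_add, zpow_neg, zpow_natCast, mul_inv_cancel₀ hpos.ne',
            add_comm]
      _ ≤ 2 ^ ℓ x := mul_le_of_le_one_right hpos.le hsum
  exact_mod_cast this

theorem two_pow_mul_kraftOffset_add_one_le (hℓ : Monotone ℓ) {x y : α} (hxy : x < y) :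
    2 ^ (ℓ y - ℓ x) * (kraftOffset ℓ x + 1) ≤ kraftOffset ℓ y := by
  calc 2 ^ (ℓ y - ℓ x) * (kraftOffset ℓ x + 1)
      = ∑ z ∈ insert x (univ.filter (· < x)), 2 ^ (ℓ y - ℓ z) := by
        rw [sum_insert (by simp), kraftOffset, mul_add, mul_one, mul_sum, add_comm]
        congr 1
        refine sum_congr rfl fun z hz => ?_
        have hzx := hℓ (mem_filter.1 hz).2.le
        have hxy' := hℓ hxy.le
        rw [← pow_add]
        congr 1
        omega
    _ ≤ kraftOffset ℓ y := by
      refine sum_le_sum_of_subset (insert_subset (by simpa using hxy) fun z hz => ?_)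
      simp only [mem_filter, mem_univ, true_and] at hz ⊢
      exact hz.trans hxy

theorem not_kraftCode_prefix (hℓ : Monotone ℓ) (hkraft : ∑ x, (2 : ℝ) ^ (-(ℓ x : ℤ)) ≤ 1)
    {x y : α} (hxy : x ≠ y) : ¬ kraftCode ℓ x <+: kraftCode ℓ y := by
  intro h
  obtain ⟨hle, heq⟩ := eq_div_two_pow_of_binaryDigits_prefix
    (kraftOffset_add_one_le hℓ hkraft x) (kraftOffset_add_one_le hℓ hkraft y) h
  rcases hxy.lt_or_gt with hlt | hgt
  · have hstep := two_pow_mul_kraftOffset_add_one_le hℓ hlt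
    have hdiv : kraftOffset ℓ x + 1 ≤ kraftOffset ℓ y / 2 ^ (ℓ y - ℓ x) :=
      (Nat.le_div_iff_mul_le (by positivity)).2 (by rwa [mul_comm])
    omega
  · have hℓeq : ℓ y = ℓ x := le_antisymm (hℓ hgt.le) hle
    have hstep := two_pow_mul_kraftOffset_add_one_le hℓ hgt
    rw [hℓeq, Nat.sub_self, pow_zero, Nat.div_one] at heq
    rw [hℓeq, Nat.sub_self, pow_zero, one_mul] at hstep
    omega

end

/-- Converse of Kraft's inequality: any lengths `ℓ` with
`∑ 2^{-ℓ x} ≤ 1` are realizable by an injective, prefix-free binary code. -/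
theorem kraft_converse
    {α : Type*} [Fintype α]
    (ℓ : α → ℕ) (hkraft : ∑ x, (2 : ℝ) ^ (-(ℓ x : ℤ)) ≤ 1) :
    ∃ C : α → List Bool,
      Function.Injective C ∧
      (∀ x y, x ≠ y → ¬ (C x <+: C y)) ∧
      (∀ x, (C x).length = ℓ x) := by
  let : LinearOrder α := LinearOrder.lift' (fun x => toLex (ℓ x, Fintype.equivFin α x))
    fun x y h => (Fintype.equivFin α).injective (Prod.ext_iff.1 (toLex.injective h)).2
  have hℓ : Monotone ℓ := fun x y hxy => Prod.Lex.monotone_fst _ _ hxy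
  have hprefix : ∀ x y, x ≠ y → ¬ kraftCode ℓ x <+: kraftCode ℓ y :=
    fun x y => not_kraftCode_prefix hℓ hkraft
  refine ⟨kraftCode ℓ, fun x y h => ?_, hprefix, fun x => length_binaryDigits _ _⟩
  by_contra hxy
  exact hprefix x y hxy (h ▸ List.prefix_refl _)
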